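/- arXiv:0906.4907 — 4 statements merged into one kernel-verified Lean document; each statement's English description precedes it below -/
import Mathlib

section
/- Let F be a finite subset of ℤ² with nonincreasing row sums (r_i) and nonincreasing column sums (c_j), and let v_j = #{l : r_l ≥ j}. If c_j = v_j for all j, then F is uniquely determined by its row and column sums: any finite F' ⊆ ℤ² with the same row sums and column sums equals F. -/
open Finset

/-- Number of elements of `F` in row `i`. -/
def rowSum (F : Finset (ℤ × ℤ)) (i : ℤ) : ℕ := (F.filter fun p => p.1 = i).card

/-- Number of elements of `F` in column `j`. -/
def colSum (F : Finset (ℤ × ℤ)) (j : ℤ) : ℕ := (F.filter fun p => p.2 = j).card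

/-- `F` has row sums `r` on rows `1..m`, column sums `c` on columns `1..n`,
and zero line sums elsewhere. -/
def hasLineSums (F : Finset (ℤ × ℤ)) (m n : ℕ) (r : Fin m → ℕ) (c : Fin n → ℕ) : Prop :=
  (∀ i : Fin m, rowSum F ((i : ℤ) + 1) = r i) ∧
  (∀ i : ℤ, (∀ k : Fin m, (k : ℤ) + 1 ≠ i) → rowSum F i = 0) ∧
  (∀ j : Fin n, colSum F ((j : ℤ) + 1) = c j) ∧
  (∀ j : ℤ, (∀ k : Fin n, (k : ℤ) + 1 ≠ j) → colSum F j = 0)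

/-- The conjugate partition: `conj m r j = #{l : r l ≥ j}`. -/
def conj (m : ℕ) (r : Fin m → ℕ) (j : ℕ) : ℕ := (Finset.univ.filter fun l => j ≤ r l).card

/-! Any `G` with row sums `r` and column sums `conj r` is the Ferrers diagram of `r`.
The first `k` columns of `G` hold `∑_{j ≤ k} conj r j = ∑_i min (r i) k` points, while row `i`
has at most `min (r i) k` points there (it has `r i` points, all in columns `≥ 1`). Hence every
row attains this bound for every `k ≤ n`, so row `i` meets column `j` only if `j ≤ r i`;
comparing cardinalities, `G` is the whole diagram. -/

lemma sum_ite_succ_le_eq_min (a k : ℕ) :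
    ∑ j : Fin k, (if (j : ℕ) + 1 ≤ a then 1 else 0) = min a k := by
  induction k with
  | zero => simp
  | succ k ih =>
    rw [Fin.sum_univ_castSucc]
    simp only [Fin.val_castSucc, Fin.val_last, ih]
    split_ifs <;> omega

lemma sum_conj_eq_sum_min (m k : ℕ) (r : Fin m → ℕ) :
    ∑ j : Fin k, conj m r ((j : ℕ) + 1) = ∑ i : Fin m, min (r i) k := by
  simp only [conj, card_filter]
  rw [sum_comm]
  exact sum_congr rfl fun i _ => sum_ite_succ_le_eq_min (r i) k

lemma exists_fin_eq_fst_of_mem {m : ℕ} {F : Finset (ℤ × ℤ)}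
    (h : ∀ i : ℤ, (∀ k : Fin m, (k : ℤ) + 1 ≠ i) → rowSum F i = 0) {p : ℤ × ℤ} (hp : p ∈ F) :
    ∃ k : Fin m, p.1 = k + 1 := by
  by_contra! hne
  have hempty := card_eq_zero.mp (h p.1 fun k hk => hne k hk.symm)
  exact (filter_eq_empty_iff.mp hempty) hp rfl

lemma exists_fin_eq_snd_of_mem {n : ℕ} {F : Finset (ℤ × ℤ)}
    (h : ∀ j : ℤ, (∀ k : Fin n, (k : ℤ) + 1 ≠ j) → colSum F j = 0) {p : ℤ × ℤ} (hp : p ∈ F) :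
    ∃ k : Fin n, p.2 = k + 1 := by
  by_contra! hne
  have hempty := card_eq_zero.mp (h p.2 fun k hk => hne k hk.symm)
  exact (filter_eq_empty_iff.mp hempty) hp rfl

lemma injective_fin_cast_add_one (m : ℕ) : Function.Injective fun i : Fin m => (i : ℤ) + 1 :=
  fun a b h => Fin.ext (by simpa using h)

lemma card_eq_sum_rowSum {m : ℕ} {F : Finset (ℤ × ℤ)} (h : ∀ p ∈ F, ∃ i : Fin m, p.1 = i + 1) :
    #F = ∑ i : Fin m, rowSum F (i + 1) := by
  rw [card_eq_sum_card_fiberwise (f := Prod.fst)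
    (t := univ.map ⟨_, injective_fin_cast_add_one m⟩), sum_map]
  · rfl
  · intro p hp
    obtain ⟨i, hi⟩ := h p hp
    simp [hi]

lemma card_eq_sum_colSum {n : ℕ} {F : Finset (ℤ × ℤ)} (h : ∀ p ∈ F, ∃ j : Fin n, p.2 = j + 1) :
    #F = ∑ j : Fin n, colSum F (j + 1) := by
  rw [card_eq_sum_card_fiberwise (f := Prod.snd)
    (t := univ.map ⟨_, injective_fin_cast_add_one n⟩), sum_map]
  · rfl
  · intro p hp
    obtain ⟨j, hj⟩ := h p hp
    simp [hj]

lemma rowSum_filter_snd_le_le_min {F : Finset (ℤ × ℤ)} (hpos : ∀ p ∈ F, 1 ≤ p.2) (i : ℤ)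
    (k : ℕ) : rowSum (F.filter fun p => p.2 ≤ k) i ≤ min (rowSum F i) k := by
  refine le_min (card_le_card (filter_subset_filter _ (filter_subset _ _))) ?_
  calc rowSum (F.filter fun p => p.2 ≤ k) i ≤ #(Icc (1 : ℤ) k) := by
        refine card_le_card_of_injOn Prod.snd (fun p hp => ?_) fun p hp q hq hpq => ?_
        · simp only [mem_coe, mem_filter] at hp
          simp [hpos p hp.1.1, hp.1.2]
        · simp only [mem_coe, mem_filter] at hp hq
          exact Prod.ext (hp.2.trans hq.2.symm) hpq
    _ = k := by simp

lemma colSum_filter_snd_le {F : Finset (ℤ × ℤ)} {j k : ℤ} (hjk : j ≤ k) :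
    colSum (F.filter fun p => p.2 ≤ k) j = colSum F j := by
  unfold colSum
  rw [filter_filter]
  congr 1
  exact filter_congr fun p _ => ⟨fun h => h.2, fun h => ⟨h ▸ hjk, h⟩⟩

lemma rowSum_filter_snd_le_lt {F : Finset (ℤ × ℤ)} {p : ℤ × ℤ} (hp : p ∈ F) {a b : ℤ}
    (ha : a < p.2) (hb : p.2 ≤ b) :
    rowSum (F.filter fun q => q.2 ≤ a) p.1 < rowSum (F.filter fun q => q.2 ≤ b) p.1 := by
  refine card_lt_card ((ssubset_iff_of_subset ?_).mpr ⟨p, ?_, ?_⟩)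
  · refine filter_subset_filter _ fun q hq => ?_
    simp only [mem_filter] at hq ⊢
    exact ⟨hq.1, by omega⟩
  · simp [hp, hb]
  · simp [ha.not_ge]

noncomputable def ferrers (m : ℕ) (r : Fin m → ℕ) : Finset (ℤ × ℤ) :=
  univ.biUnion fun i : Fin m => {((i : ℤ) + 1)} ×ˢ Icc 1 (r i : ℤ)

lemma mem_ferrers {m : ℕ} {r : Fin m → ℕ} {p : ℤ × ℤ} :
    p ∈ ferrers m r ↔ ∃ i : Fin m, p.1 = i + 1 ∧ 1 ≤ p.2 ∧ p.2 ≤ r i := by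
  simp only [ferrers, mem_biUnion, mem_univ, true_and, mem_product, mem_singleton, mem_Icc]

lemma card_ferrers (m : ℕ) (r : Fin m → ℕ) : #(ferrers m r) = ∑ i, r i := by
  rw [ferrers, card_biUnion]
  · simp
  · intro i _ i' _ hne
    simp only [disjoint_left, mem_product, mem_singleton]
    exact fun p hp hp' => hne (injective_fin_cast_add_one m (hp.1.symm.trans hp'.1 :))

section ConjugateColumnSums

variable {m n : ℕ} {r : Fin m → ℕ} {G : Finset (ℤ × ℤ)}

lemma rowSum_filter_snd_le_eq_min (hG : hasLineSums G m n r fun j => conj m r ((j : ℕ) + 1))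
    {k : ℕ} (hk : k ≤ n) (i : Fin m) :
    rowSum (G.filter fun p => p.2 ≤ (k : ℤ)) ((i : ℤ) + 1) = min (r i) k := by
  obtain ⟨hrow, hrow0, hcol, hcol0⟩ := hG
  set Gk := G.filter fun p => p.2 ≤ (k : ℤ)
  have hGk_rows : ∀ p ∈ Gk, ∃ i : Fin m, p.1 = i + 1 :=
    fun p hp => exists_fin_eq_fst_of_mem hrow0 (mem_of_mem_filter p hp)
  have hGk_cols : ∀ p ∈ Gk, ∃ j : Fin k, p.2 = j + 1 := by
    intro p hp
    rw [mem_filter] at hp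
    obtain ⟨j, hj⟩ := exists_fin_eq_snd_of_mem hcol0 hp.1
    exact ⟨⟨j, by omega⟩, hj⟩
  have hcolk : ∀ j : Fin k, colSum Gk (j + 1) = conj m r ((j : ℕ) + 1) := fun j => by
    rw [colSum_filter_snd_le (by omega), hcol ⟨j, by omega⟩]
  have htotal : ∑ i : Fin m, rowSum Gk ((i : ℤ) + 1) = ∑ i : Fin m, min (r i) k := by
    rw [← card_eq_sum_rowSum hGk_rows, card_eq_sum_colSum hGk_cols, ← sum_conj_eq_sum_min]
    exact sum_congr rfl fun j _ => hcolk j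
  have hle : ∀ i ∈ (univ : Finset (Fin m)), rowSum Gk ((i : ℤ) + 1) ≤ min (r i) k := by
    intro i _
    rw [← hrow i]
    exact rowSum_filter_snd_le_le_min
      (fun p hp => by obtain ⟨j, hj⟩ := exists_fin_eq_snd_of_mem hcol0 hp; omega) _ k
  exact (sum_eq_sum_iff_of_le hle).mp htotal i (mem_univ i)

lemma subset_ferrers_of_hasLineSums_conj
    (hG : hasLineSums G m n r fun j => conj m r ((j : ℕ) + 1)) : G ⊆ ferrers m r := by
  intro p hp
  obtain ⟨i, hi⟩ := exists_fin_eq_fst_of_mem hG.2.1 hp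
  obtain ⟨j, hj⟩ := exists_fin_eq_snd_of_mem hG.2.2.2 hp
  refine mem_ferrers.mpr ⟨i, hi, by omega, ?_⟩
  by_contra! hlt
  have hstep := rowSum_filter_snd_le_lt hp (a := (j : ℕ)) (b := ((j + 1 : ℕ) : ℤ))
    (by omega) (by omega)
  rw [hi, rowSum_filter_snd_le_eq_min hG j.isLt.le i,
    rowSum_filter_snd_le_eq_min hG j.isLt i] at hstep
  omega

lemma eq_ferrers_of_hasLineSums_conj
    (hG : hasLineSums G m n r fun j => conj m r ((j : ℕ) + 1)) : G = ferrers m r := by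
  refine eq_of_subset_of_card_le (subset_ferrers_of_hasLineSums_conj hG) ?_
  rw [card_ferrers, card_eq_sum_rowSum fun p hp => exists_fin_eq_fst_of_mem hG.2.1 hp]
  exact (sum_congr rfl fun i _ => hG.1 i).ge

end ConjugateColumnSums

lemma hasLineSums_of_lineSums_eq {F F' : Finset (ℤ × ℤ)} {m n : ℕ} {r : Fin m → ℕ}
    {c : Fin n → ℕ} (hF : hasLineSums F m n r c) (hrow : ∀ i, rowSum F' i = rowSum F i)
    (hcol : ∀ j, colSum F' j = colSum F j) : hasLineSums F' m n r c := by
  simpa only [hasLineSums, hrow, hcol] using hF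

theorem stmt3_general (m n : ℕ) (r : Fin m → ℕ) (c : Fin n → ℕ) (F : Finset (ℤ × ℤ))
    (hF : hasLineSums F m n r c)
    (hcv : ∀ j : Fin n, c j = conj m r ((j : ℕ) + 1)) :
    ∀ F' : Finset (ℤ × ℤ),
      (∀ i : ℤ, rowSum F' i = rowSum F i) →
      (∀ j : ℤ, colSum F' j = colSum F j) → F' = F := by
  intro F' hrow hcol
  obtain rfl : c = fun j : Fin n => conj m r ((j : ℕ) + 1) := funext hcv
  rw [eq_ferrers_of_hasLineSums_conj hF,
    eq_ferrers_of_hasLineSums_conj (hasLineSums_of_lineSums_eq hF hrow hcol)]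

theorem stmt3 (m n : ℕ) (r : Fin m → ℕ) (c : Fin n → ℕ) (F : Finset (ℤ × ℤ))
    (hr : Antitone r) (hc : Antitone c) (hF : hasLineSums F m n r c)
    (hcv : ∀ j : Fin n, c j = conj m r ((j : ℕ) + 1)) :
    ∀ F' : Finset (ℤ × ℤ),
      (∀ i : ℤ, rowSum F' i = rowSum F i) →
      (∀ j : ℤ, colSum F' j = colSum F j) → F' = F :=
  stmt3_general m n r c F hF hcv
end

section
/- Let row sums r₁ ≥ … ≥ r_m and column sums c₁ ≥ … ≥ c_n be consistent, with v_j = #{l : r_l ≥ j} and α = (1/2)Σ_j |c_j − v_j|. Then α = 0 if and only if there is exactly one finite subset of ℤ² with these row and column sums. -/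
open Finset

/-! A set with these line sums lies in the box `[1, m] × [1, n]`; view it as a relation `R` on
`Fin m × Fin n`. If `c` is conjugate to `r`, counting the cells in the first `k` columns gives
`∑ i, #{j < k | R i j} = ∑ i, min (r i) k`, while each summand is at most `min (r i) k`; taking
`k = r i` shows that row `i` is the initial segment `{j < r i}`. So every solution is the Ferrers
diagram of `r`. Conversely, a unique solution admits no switching
`(a, b), (a', b') ↦ (a, b'), (a', b)`, so its rows are totally ordered by inclusion; as `c` is
antitone, every row is then an initial segment, the solution is the Ferrers diagram of `r`, and
its column sums are the conjugate of `r`. -/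

theorem sum_card_filter_and_eq_of_card_col_eq {ι κ : Type*} [Fintype ι] [Fintype κ]
    {R R' : ι → κ → Prop} [∀ i j, Decidable (R i j)] [∀ i j, Decidable (R' i j)]
    (hcol : ∀ j, #{i | R i j} = #{i | R' i j}) (P : κ → Prop) [DecidablePred P] :
    ∑ i, #{j | P j ∧ R i j} = ∑ i, #{j | P j ∧ R' i j} := by
  have hcol' : ∀ j, #{i | P j ∧ R i j} = #{i | P j ∧ R' i j} := fun j => by
    by_cases hj : P j <;> simp [hj, hcol]
  exact (sum_card_bipartiteAbove_eq_sum_card_bipartiteBelow _).trans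
    ((sum_congr rfl fun j _ => hcol' j).trans
      (sum_card_bipartiteAbove_eq_sum_card_bipartiteBelow _).symm)

section Ferrers

variable {ι : Type*} [Fintype ι] {n : ℕ} {R : ι → Fin n → Prop} [∀ i j, Decidable (R i j)]
  {r : ι → ℕ}

theorem iff_val_lt_of_card_col_eq (hrow : ∀ i, #{j | R i j} = r i)
    (hcol : ∀ j : Fin n, #{i | R i j} = #{i | (j : ℕ) < r i}) (i : ι) (j : Fin n) :
    R i j ↔ (j : ℕ) < r i := by
  have hrn : ∀ i, r i ≤ n := fun i => by
    simpa [hrow i] using card_le_univ (univ.filter (R i))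
  have hprefix : ∀ k : ℕ, ∑ i, #{j : Fin n | (j : ℕ) < k ∧ R i j} = ∑ i, min (r i) k := by
    intro k
    rw [sum_card_filter_and_eq_of_card_col_eq hcol]
    refine sum_congr rfl fun i _ => ?_
    simp only [← lt_min_iff, Fin.card_filter_val_lt]
    have := hrn i
    omega
  have hle : ∀ i k, #{j : Fin n | (j : ℕ) < k ∧ R i j} ≤ min (r i) k := fun i k =>
    le_min ((hrow i).symm ▸ card_le_card (monotone_filter_right _ fun _ _ h => h.2))
      ((card_le_card (monotone_filter_right _ fun _ _ h => h.1)).trans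
        (Fin.card_filter_val_lt.trans_le (min_le_right _ _)))
  have hinit : #{j : Fin n | (j : ℕ) < r i ∧ R i j} = r i := by
    simpa using (sum_eq_sum_iff_of_le fun i' _ => hle i' (r i)).1 (hprefix (r i)) i (mem_univ i)
  have hrows : ({j | R i j} : Finset (Fin n)) = ({j | (j : ℕ) < r i} : Finset (Fin n)) := by
    have hR := eq_of_subset_of_card_le (monotone_filter_right _ fun _ _ h => h.2)
      ((hrow i).trans hinit.symm).le
    have hlt := eq_of_subset_of_card_le (monotone_filter_right _ fun _ _ h => h.1)
      (Fin.card_filter_val_lt.trans_le ((min_le_right _ _).trans hinit.ge))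
    exact hR.symm.trans hlt
  simpa using congrArg (j ∈ ·) hrows

theorem iff_val_lt_of_rows_total [DecidableEq ι] {c : Fin n → ℕ} (hc : Antitone c)
    (hrow : ∀ i, #{j | R i j} = r i) (hcol : ∀ j, #{i | R i j} = c j)
    (htotal : ∀ i i', R i ≤ R i' ∨ R i' ≤ R i) (i : ι) (j : Fin n) :
    R i j ↔ (j : ℕ) < r i := by
  have hlower : ∀ j j', j ≤ j' → R i j' → R i j := by
    intro j j' hjj' hj'
    by_contra hj
    have hsub : insert i ({i' | R i' j} : Finset ι) ⊆ ({i' | R i' j'} : Finset ι) := by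
      intro i' hi'
      rcases mem_insert.1 hi' with rfl | hi'
      · simpa using hj'
      · rcases htotal i i' with hle | hle
        · simpa using hle j' hj'
        · exact absurd (hle j (mem_filter.1 hi').2) hj
    have hcard := card_le_card hsub
    rw [card_insert_of_notMem (by simpa using hj), hcol, hcol] at hcard
    have := hc hjj'
    omega
  rw [← hrow i]
  exact (Fin.lt_card_filter_univ_iff_apply_of_imp _ fun a b hab => hlower b a hab).symm

end Ferrers

theorem Finset.sum_sdiff_pair_union_pair {α M : Type*} [DecidableEq α] [AddCommMonoid M]
    {s : Finset α} {x y u v : α} (hx : x ∈ s) (hy : y ∈ s) (hu : u ∉ s) (hv : v ∉ s)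
    (hxy : x ≠ y) (huv : u ≠ v) (f : α → M) (hf : f x + f y = f u + f v) :
    ∑ p ∈ s \ {x, y} ∪ {u, v}, f p = ∑ p ∈ s, f p := by
  have hdisj : Disjoint (s \ {x, y}) {u, v} := by
    simp only [disjoint_insert_right, disjoint_singleton_right, mem_sdiff]
    tauto
  rw [sum_union hdisj, sum_pair huv, ← hf, ← sum_pair hxy,
    sum_sdiff (insert_subset hx (singleton_subset_iff.2 hy))]

/-- Row `i : Fin m` and column `j : Fin n` of the box are the lines `i + 1` and `j + 1` of `ℤ²`. -/
abbrev CellMem (F : Finset (ℤ × ℤ)) {m n : ℕ} (i : Fin m) (j : Fin n) : Prop :=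
  ((i : ℤ) + 1, (j : ℤ) + 1) ∈ F

namespace hasLineSums

variable {F G : Finset (ℤ × ℤ)} {m n : ℕ} {r : Fin m → ℕ} {c : Fin n → ℕ}

theorem exists_eq_of_mem (h : hasLineSums F m n r c) {p : ℤ × ℤ} (hp : p ∈ F) :
    ∃ (i : Fin m) (j : Fin n), p = ((i : ℤ) + 1, (j : ℤ) + 1) := by
  have hrow : ∃ i : Fin m, (i : ℤ) + 1 = p.1 := by
    by_contra! hne
    have h0 := h.2.1 p.1 hne
    rw [rowSum, card_eq_zero, filter_eq_empty_iff] at h0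
    exact h0 hp rfl
  have hcol : ∃ j : Fin n, (j : ℤ) + 1 = p.2 := by
    by_contra! hne
    have h0 := h.2.2.2 p.2 hne
    rw [colSum, card_eq_zero, filter_eq_empty_iff] at h0
    exact h0 hp rfl
  obtain ⟨i, hi⟩ := hrow
  obtain ⟨j, hj⟩ := hcol
  exact ⟨i, j, Prod.ext hi.symm hj.symm⟩

theorem card_row (h : hasLineSums F m n r c) (i : Fin m) :
    #{j : Fin n | CellMem F i j} = r i := by
  rw [← h.1 i, rowSum]
  refine card_nbij (fun j => ((i : ℤ) + 1, (j : ℤ) + 1)) (fun j hj => by simpa using hj)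
    (fun j _ j' _ hjj' => by simpa [Fin.val_inj] using hjj') fun p hp => ?_
  obtain ⟨hpF, hpi⟩ := mem_filter.1 hp
  obtain ⟨i', j, rfl⟩ := h.exists_eq_of_mem hpF
  obtain rfl : i' = i := by simpa [Fin.val_inj] using hpi
  exact ⟨j, by simpa using hpF, rfl⟩

theorem card_col (h : hasLineSums F m n r c) (j : Fin n) :
    #{i : Fin m | CellMem F i j} = c j := by
  rw [← h.2.2.1 j, colSum]
  refine card_nbij (fun i => ((i : ℤ) + 1, (j : ℤ) + 1)) (fun i hi => by simpa using hi)
    (fun i _ i' _ hii' => by simpa [Fin.val_inj] using hii') fun p hp => ?_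
  obtain ⟨hpF, hpj⟩ := mem_filter.1 hp
  obtain ⟨i, j', rfl⟩ := h.exists_eq_of_mem hpF
  obtain rfl : j' = j := by simpa [Fin.val_inj] using hpj
  exact ⟨i, by simpa using hpF, rfl⟩

theorem eq_of_cellMem_iff (hF : hasLineSums F m n r c) (hG : hasLineSums G m n r c)
    (hFG : ∀ (i : Fin m) (j : Fin n), CellMem F i j ↔ CellMem G i j) : F = G := by
  have hsub : ∀ {F G : Finset (ℤ × ℤ)}, hasLineSums F m n r c →
      (∀ (i : Fin m) (j : Fin n), CellMem F i j → CellMem G i j) → F ⊆ G := fun hF hFG p hp => by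
    obtain ⟨i, j, rfl⟩ := hF.exists_eq_of_mem hp
    exact hFG i j hp
  exact Subset.antisymm (hsub hF fun i j => (hFG i j).1) (hsub hG fun i j => (hFG i j).2)

theorem of_rowSum_colSum_eq (h : hasLineSums F m n r c) (hrow : ∀ z, rowSum G z = rowSum F z)
    (hcol : ∀ z, colSum G z = colSum F z) : hasLineSums G m n r c := by
  simpa only [hasLineSums, hrow, hcol] using h

theorem switch (h : hasLineSums F m n r c) {a a' b b' : ℤ} (hab : (a, b) ∈ F)
    (ha'b' : (a', b') ∈ F) (hab' : (a, b') ∉ F) (ha'b : (a', b) ∉ F) :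
    hasLineSums (F \ {(a, b), (a', b')} ∪ {(a, b'), (a', b)}) m n r c := by
  have ha : a ≠ a' := by
    rintro rfl
    exact ha'b hab
  have hsum := fun (f : ℤ × ℤ → ℕ) hf =>
    sum_sdiff_pair_union_pair hab ha'b' hab' ha'b (by simp [ha]) (by simp [ha]) f hf
  refine h.of_rowSum_colSum_eq (fun z => ?_) (fun z => ?_)
  · simp only [rowSum, card_filter]
    exact hsum _ rfl
  · simp only [colSum, card_filter]
    exact hsum _ (add_comm _ _)

theorem rows_total_of_unique (h : hasLineSums F m n r c)
    (huniq : ∀ G, hasLineSums G m n r c → G = F) (a a' : ℤ) :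
    (∀ b, (a, b) ∈ F → (a', b) ∈ F) ∨ (∀ b, (a', b) ∈ F → (a, b) ∈ F) := by
  by_contra! hcon
  obtain ⟨⟨b, hab, ha'b⟩, ⟨b', ha'b', hab'⟩⟩ := hcon
  apply hab'
  rw [← huniq _ (h.switch hab ha'b' hab' ha'b)]
  simp

theorem cellMem_iff_of_col_eq_conj (h : hasLineSums F m n r c)
    (hconj : ∀ j : Fin n, c j = conj m r ((j : ℕ) + 1)) (i : Fin m) (j : Fin n) :
    CellMem F i j ↔ (j : ℕ) < r i :=
  iff_val_lt_of_card_col_eq h.card_row (fun j => (h.card_col j).trans (hconj j)) i j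

theorem cellMem_iff_of_unique (h : hasLineSums F m n r c) (hc : Antitone c)
    (huniq : ∀ G, hasLineSums G m n r c → G = F) (i : Fin m) (j : Fin n) :
    CellMem F i j ↔ (j : ℕ) < r i :=
  iff_val_lt_of_rows_total hc h.card_row h.card_col
    (fun _ _ => (h.rows_total_of_unique huniq _ _).imp (fun H _ => H _) (fun H _ => H _)) i j

end hasLineSums

theorem stmt11_general (m n α : ℕ) (r : Fin m → ℕ) (c : Fin n → ℕ)
    (hc : Antitone c)
    (hcons : ∃ F : Finset (ℤ × ℤ), hasLineSums F m n r c)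
    (hα : 2 * α = ∑ j : Fin n, ((c j : ℤ) - (conj m r ((j : ℕ) + 1) : ℤ)).natAbs) :
    α = 0 ↔ ∃! F : Finset (ℤ × ℤ), hasLineSums F m n r c := by
  have hα0 : α = 0 ↔ ∀ j : Fin n, c j = conj m r ((j : ℕ) + 1) := by
    rw [show α = 0 ↔ ∑ j : Fin n, ((c j : ℤ) - (conj m r ((j : ℕ) + 1) : ℤ)).natAbs = 0 by omega,
      sum_eq_zero_iff]
    simp [sub_eq_zero]
  rw [hα0]
  constructor
  · intro hconj
    obtain ⟨F, hF⟩ := hcons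
    refine ⟨F, hF, fun G hG => hG.eq_of_cellMem_iff hF fun i j => ?_⟩
    rw [hG.cellMem_iff_of_col_eq_conj hconj, hF.cellMem_iff_of_col_eq_conj hconj]
  · rintro ⟨F, hF, huniq⟩ j
    rw [← hF.card_col j, conj]
    exact congrArg card (filter_congr fun i _ => hF.cellMem_iff_of_unique hc huniq i j)

theorem stmt11 (m n α : ℕ) (r : Fin m → ℕ) (c : Fin n → ℕ)
    (hr : Antitone r) (hc : Antitone c)
    (hcons : ∃ F : Finset (ℤ × ℤ), hasLineSums F m n r c)
    (hα : 2 * α = ∑ j : Fin n, ((c j : ℤ) - (conj m r ((j : ℕ) + 1) : ℤ)).natAbs) :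
    α = 0 ↔ ∃! F : Finset (ℤ × ℤ), hasLineSums F m n r c :=
  stmt11_general m n α r c hc hcons hα
end

section
/- Let F be a finite subset of ℤ² that is uniquely determined by its row sums r₁ ≥ r₂ ≥ … ≥ r_m and column sums c₁ ≥ c₂ ≥ … ≥ c_n. Then c_j = #{l : r_l ≥ j} for all 1 ≤ j ≤ n. -/
open Finset

lemma rowSum_eq_sum (F : Finset (ℤ × ℤ)) (i : ℤ) :
    rowSum F i = ∑ p ∈ F, if p.1 = i then 1 else 0 := Finset.card_filter _ _
lemma colSum_eq_sum (F : Finset (ℤ × ℤ)) (j : ℤ) :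
    colSum F j = ∑ p ∈ F, if p.2 = j then 1 else 0 := Finset.card_filter _ _

/-- no-switch from uniqueness -/
lemma swap_mem (F : Finset (ℤ × ℤ))
    (huniq : ∀ F' : Finset (ℤ × ℤ),
      (∀ i : ℤ, rowSum F' i = rowSum F i) →
      (∀ j : ℤ, colSum F' j = colSum F j) → F' = F)
    {a b a' b' : ℤ} (hab : (a, b) ∈ F) (hab' : (a', b') ∈ F)
    (ha : a ≠ a') (hb : b ≠ b') (h1 : (a, b') ∉ F) : (a', b) ∈ F := by
  by_contra h2
  set E := (F.erase (a, b)).erase (a', b') with hE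
  have hne : ((a', b') : ℤ × ℤ) ≠ (a, b) := by simp [ha.symm]
  have hmemE1 : ((a', b') : ℤ × ℤ) ∈ F.erase (a, b) := Finset.mem_erase.2 ⟨hne, hab'⟩
  have hF1 : insert (a', b') E = F.erase (a, b) := Finset.insert_erase hmemE1
  have hF2 : insert (a, b) (F.erase (a, b)) = F := Finset.insert_erase hab
  have hab'E : ((a', b') : ℤ × ℤ) ∉ E := Finset.notMem_erase _ _
  have habE : ((a, b) : ℤ × ℤ) ∉ insert (a', b') E := by
    rw [hF1]; exact Finset.notMem_erase _ _
  -- the swapped set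
  set F' := insert (a, b') (insert (a', b) E) with hF'
  have hab'nE : ((a, b') : ℤ × ℤ) ∉ E := fun h => h1 (Finset.mem_of_mem_erase (Finset.mem_of_mem_erase h))
  have ha'bnE : ((a', b) : ℤ × ℤ) ∉ E := fun h => h2 (Finset.mem_of_mem_erase (Finset.mem_of_mem_erase h))
  have hab'nI : ((a, b') : ℤ × ℤ) ∉ insert (a', b) E := by
    simp only [Finset.mem_insert]
    rintro (h | h)
    · exact ha (by simpa using congrArg Prod.fst h)
    · exact hab'nE h
  have key : ∀ f : ℤ × ℤ → ℕ, f (a, b') + f (a', b) = f (a, b) + f (a', b') →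
      ∑ p ∈ F', f p = ∑ p ∈ F, f p := by
    intro f hf
    rw [hF', Finset.sum_insert hab'nI, Finset.sum_insert ha'bnE,
      ← hF2, ← hF1, Finset.sum_insert habE, Finset.sum_insert hab'E]
    omega
  have hrow : ∀ i : ℤ, rowSum F' i = rowSum F i := by
    intro i
    rw [rowSum_eq_sum, rowSum_eq_sum]
    exact key _ (by simp)
  have hcol : ∀ j : ℤ, colSum F' j = colSum F j := by
    intro j
    rw [colSum_eq_sum, colSum_eq_sum]
    exact key _ (by simp; omega)
  have := huniq F' hrow hcol
  exact h1 (this ▸ Finset.mem_insert_self _ _)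
lemma col_exists {F : Finset (ℤ × ℤ)} {m n : ℕ} {r : Fin m → ℕ} {c : Fin n → ℕ}
    (hF : hasLineSums F m n r c) {p : ℤ × ℤ} (hp : p ∈ F) : ∃ l : Fin n, (l : ℤ) + 1 = p.2 := by
  by_contra h
  push_neg at h
  have h0 := hF.2.2.2 p.2 h
  have : p ∈ F.filter fun q => q.2 = p.2 := Finset.mem_filter.2 ⟨hp, rfl⟩
  have := Finset.card_pos.2 ⟨p, this⟩
  rw [show (F.filter fun q => q.2 = p.2).card = colSum F p.2 from rfl, h0] at this
  exact absurd this (by omega)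

lemma row_exists {F : Finset (ℤ × ℤ)} {m n : ℕ} {r : Fin m → ℕ} {c : Fin n → ℕ}
    (hF : hasLineSums F m n r c) {p : ℤ × ℤ} (hp : p ∈ F) : ∃ k : Fin m, (k : ℤ) + 1 = p.1 := by
  by_contra h
  push_neg at h
  have h0 := hF.2.1 p.1 h
  have : p ∈ F.filter fun q => q.1 = p.1 := Finset.mem_filter.2 ⟨hp, rfl⟩
  have := Finset.card_pos.2 ⟨p, this⟩
  rw [show (F.filter fun q => q.1 = p.1).card = rowSum F p.1 from rfl, h0] at this
  exact absurd this (by omega)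

lemma card_col_image (F : Finset (ℤ × ℤ)) (j : ℤ) :
    ((F.filter fun p => p.2 = j).image Prod.fst).card = colSum F j := by
  rw [Finset.card_image_of_injOn]
  · rfl
  intro p hp q hq hpq
  simp only [Finset.mem_coe, Finset.mem_filter] at hp hq
  exact Prod.ext hpq (hp.2.trans hq.2.symm)

lemma down_closed {F : Finset (ℤ × ℤ)} {m n : ℕ} {r : Fin m → ℕ} {c : Fin n → ℕ}
    (hF : hasLineSums F m n r c) (hc : Antitone c)
    (huniq : ∀ F' : Finset (ℤ × ℤ),
      (∀ i : ℤ, rowSum F' i = rowSum F i) →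
      (∀ j : ℤ, colSum F' j = colSum F j) → F' = F)
    {i j j' : ℤ} (hij : (i, j) ∈ F) (h1 : 1 ≤ j') (h2 : j' ≤ j) : (i, j') ∈ F := by
  rcases eq_or_lt_of_le h2 with rfl | hlt
  · exact hij
  obtain ⟨l, hl0⟩ := col_exists hF hij
  have hl : (l : ℤ) + 1 = j := hl0
  have hln : (l : ℤ) < n := by exact_mod_cast l.2
  have hj'n : j' - 1 < (n : ℤ) := by omega
  have hl'lt : (j' - 1).toNat < n := by omega
  set l' : Fin n := ⟨(j' - 1).toNat, hl'lt⟩ with hl'def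
  have hl' : (l' : ℤ) + 1 = j' := by simp [hl'def]; omega
  have hle : l' ≤ l := by
    rw [Fin.le_def]
    have : ((l' : ℕ) : ℤ) ≤ (l : ℕ) := by rw [hl'def]; simp; omega
    exact_mod_cast this
  have hcc : colSum F j ≤ colSum F j' := by
    rw [← hl, ← hl', hF.2.2.1, hF.2.2.1]
    exact hc hle
  by_contra hmem
  set A := (F.filter fun p => p.2 = j').image Prod.fst with hA
  set B := (F.filter fun p => p.2 = j).image Prod.fst with hB
  have hcardA : A.card = colSum F j' := card_col_image F j'
  have hcardB : B.card = colSum F j := card_col_image F j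
  have hiB : i ∈ B := Finset.mem_image.2 ⟨(i, j), Finset.mem_filter.2 ⟨hij, rfl⟩, rfl⟩
  have hiA : i ∉ A := by
    intro h
    obtain ⟨p, hp, hp1⟩ := Finset.mem_image.1 h
    obtain ⟨hpF, hp2⟩ := Finset.mem_filter.1 hp
    exact hmem (by rwa [show p = (i, j') from Prod.ext hp1 hp2] at hpF)
  have hnsub : ¬ A ⊆ B := by
    intro hsub
    have : A ⊆ B.erase i := fun x hx => Finset.mem_erase.2 ⟨fun hxi => hiA (hxi ▸ hx), hsub hx⟩
    have := Finset.card_le_card this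
    rw [Finset.card_erase_of_mem hiB] at this
    have hBpos : 0 < B.card := Finset.card_pos.2 ⟨i, hiB⟩
    omega
  obtain ⟨i', hi'A, hi'B⟩ := Finset.not_subset.1 hnsub
  have hi'j' : (i', j') ∈ F := by
    obtain ⟨p, hp, hp1⟩ := Finset.mem_image.1 hi'A
    obtain ⟨hpF, hp2⟩ := Finset.mem_filter.1 hp
    rwa [show p = (i', j') from Prod.ext hp1 hp2] at hpF
  have hii' : i ≠ i' := fun h => hiA (h ▸ hi'A)
  have hjj' : j ≠ j' := by omega
  have := swap_mem F huniq hij hi'j' hii' hjj' hmem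
  exact hi'B (Finset.mem_image.2 ⟨(i', j), Finset.mem_filter.2 ⟨this, rfl⟩, rfl⟩)
lemma mem_iff {F : Finset (ℤ × ℤ)} {m n : ℕ} {r : Fin m → ℕ} {c : Fin n → ℕ}
    (hF : hasLineSums F m n r c) (hc : Antitone c)
    (huniq : ∀ F' : Finset (ℤ × ℤ),
      (∀ i : ℤ, rowSum F' i = rowSum F i) →
      (∀ j : ℤ, colSum F' j = colSum F j) → F' = F)
    (i j : ℤ) : (i, j) ∈ F ↔ 1 ≤ j ∧ j ≤ (rowSum F i : ℤ) := by
  set T := (F.filter fun p => p.1 = i).image Prod.snd with hTdef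
  have hT : ∀ x : ℤ, x ∈ T ↔ (i, x) ∈ F := by
    intro x
    constructor
    · intro hx
      obtain ⟨p, hp, hp2⟩ := Finset.mem_image.1 hx
      obtain ⟨hpF, hp1⟩ := Finset.mem_filter.1 hp
      rwa [show p = (i, x) from Prod.ext hp1 hp2] at hpF
    · intro hx
      exact Finset.mem_image.2 ⟨(i, x), Finset.mem_filter.2 ⟨hx, rfl⟩, rfl⟩
  have hcard : T.card = rowSum F i := by
    rw [hTdef, Finset.card_image_of_injOn]
    · rfl
    intro p hp q hq hpq
    simp only [Finset.mem_coe, Finset.mem_filter] at hp hq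
    exact Prod.ext (hp.2.trans hq.2.symm) hpq
  have hone : ∀ x ∈ T, 1 ≤ x := by
    intro x hx
    obtain ⟨l, hl⟩ := col_exists hF ((hT x).1 hx)
    have hl' : (l : ℤ) + 1 = x := hl
    have : (0 : ℤ) ≤ (l : ℕ) := Int.natCast_nonneg _
    omega
  have hdc : ∀ x ∈ T, ∀ y : ℤ, 1 ≤ y → y ≤ x → y ∈ T := by
    intro x hx y h1 h2
    exact (hT y).2 (down_closed hF hc huniq ((hT x).1 hx) h1 h2)
  rw [← hT, ← hcard]
  constructor
  · intro hx
    refine ⟨hone _ hx, ?_⟩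
    have hsub : Finset.Icc 1 j ⊆ T := fun y hy => by
      rw [Finset.mem_Icc] at hy; exact hdc j hx y hy.1 hy.2
    have := Finset.card_le_card hsub
    rw [Int.card_Icc] at this
    omega
  · rintro ⟨h1, h2⟩
    by_contra hx
    have hsub : T ⊆ Finset.Icc 1 (j - 1) := by
      intro t ht
      rw [Finset.mem_Icc]
      refine ⟨hone t ht, ?_⟩
      by_contra htj
      exact hx (hdc t ht j h1 (by omega))
    have := Finset.card_le_card hsub
    rw [Int.card_Icc] at this
    omega

theorem stmt12 (m n : ℕ) (r : Fin m → ℕ) (c : Fin n → ℕ) (F : Finset (ℤ × ℤ))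
    (hr : Antitone r) (hc : Antitone c) (hF : hasLineSums F m n r c)
    (huniq : ∀ F' : Finset (ℤ × ℤ),
      (∀ i : ℤ, rowSum F' i = rowSum F i) →
      (∀ j : ℤ, colSum F' j = colSum F j) → F' = F) :
    ∀ j : Fin n, c j = conj m r ((j : ℕ) + 1) := by
  intro j
  rw [← hF.2.2.1 j]
  have hset : F.filter (fun p => p.2 = (j : ℤ) + 1) =
      (Finset.univ.filter fun k : Fin m => (j : ℕ) + 1 ≤ r k).image
        (fun k : Fin m => (((k : ℕ) : ℤ) + 1, ((j : ℕ) : ℤ) + 1)) := by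
    ext p
    simp only [Finset.mem_filter, Finset.mem_image, Finset.mem_univ, true_and]
    constructor
    · rintro ⟨hpF, hp2⟩
      obtain ⟨k, hk⟩ := row_exists hF hpF
      have hmem := (mem_iff hF hc huniq p.1 p.2).1 (by rwa [Prod.mk.eta])
      have hrk : rowSum F p.1 = r k := by rw [← hk]; exact hF.1 k
      rw [hrk, hp2] at hmem
      have : ((j : ℕ) : ℤ) + 1 ≤ (r k : ℤ) := hmem.2
      exact ⟨k, by exact_mod_cast this, Prod.ext hk hp2.symm⟩
    · rintro ⟨k, hkr, rfl⟩
      refine ⟨(mem_iff hF hc huniq _ _).2 ⟨by omega, ?_⟩, rfl⟩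
      rw [hF.1 k]
      exact_mod_cast hkr
  show colSum F ((j : ℤ) + 1) = _
  rw [colSum, hset, Finset.card_image_of_injective _ ?_, conj]
  intro k k' hkk'
  have : ((k : ℕ) : ℤ) = ((k' : ℕ) : ℤ) := by
    have := congrArg Prod.fst hkk'
    simpa using this
  exact Fin.ext (by exact_mod_cast this)
end

section
/- For every integer α ≥ 1 there exist consistent row sums and column sums with parameter α (i.e., (1/2)Σ_j |c_j − v_j| = α where v is the conjugate of the row sums) that admit at least two solutions, and such that every pair of finite sets F₂, F₃ ⊆ ℤ² realizing these line sums satisfies |F₂ △ F₃| ≤ 2α + 2. -/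
open Finset

/-! On the `(α + 1) × (α + 1)` grid with all line sums `1` the solutions are the permutation
matrices, and the conjugate of the row sums is `(α + 1, 0, …, 0)`, so the parameter is `α`.
Two distinct permutations give two solutions, and since every solution has `α + 1` points,
two solutions differ in at most `2α + 2` points. -/

lemma card_eq_sum_of_hasLineSums {F : Finset (ℤ × ℤ)} {m n : ℕ} {r : Fin m → ℕ}
    {c : Fin n → ℕ} (h : hasLineSums F m n r c) : #F = ∑ k, r k := by
  obtain ⟨hrow, hzero, -, -⟩ := h
  have hrows : ∀ p ∈ F, p.1 ∈ univ.image fun k : Fin m => (k : ℤ) + 1 := by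
    intro p hp
    by_contra hp'
    simp only [mem_image, mem_univ, true_and, not_exists] at hp'
    have hp0 : rowSum F p.1 ≠ 0 := card_ne_zero_of_mem (mem_filter.2 ⟨hp, rfl⟩)
    exact hp0 (hzero p.1 hp')
  rw [card_eq_sum_card_fiberwise hrows, sum_image fun a _ b _ hab => by ext; simpa using hab]
  exact sum_congr rfl fun k _ => hrow k

lemma card_symmDiff_le_card_add_card {α : Type*} [DecidableEq α] (s t : Finset α) :
    #((s \ t) ∪ (t \ s)) ≤ #s + #t :=
  (card_union_le _ _).trans (add_le_add (card_le_card sdiff_subset) (card_le_card sdiff_subset))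

def permSet {m : ℕ} (σ : Equiv.Perm (Fin m)) : Finset (ℤ × ℤ) :=
  univ.image fun k : Fin m => ((k : ℤ) + 1, (σ k : ℤ) + 1)

section permSet

variable {m : ℕ}

lemma card_filter_coe_add_one_eq_one (k₀ : Fin m) :
    #{k : Fin m | (k : ℤ) + 1 = (k₀ : ℤ) + 1} = 1 := by
  rw [card_eq_one]
  exact ⟨k₀, by ext k; simp [Fin.ext_iff]⟩

lemma card_filter_coe_add_one_eq_zero {i : ℤ} (hi : ∀ k : Fin m, (k : ℤ) + 1 ≠ i) :
    #{k : Fin m | (k : ℤ) + 1 = i} = 0 :=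
  card_eq_zero.2 (filter_eq_empty_iff.2 fun k _ => hi k)

lemma injective_coe_add_one_prod (σ : Equiv.Perm (Fin m)) :
    Function.Injective fun k : Fin m => ((k : ℤ) + 1, (σ k : ℤ) + 1) := by
  intro a b hab
  ext
  simpa using congrArg Prod.fst hab

lemma rowSum_permSet (σ : Equiv.Perm (Fin m)) (i : ℤ) :
    rowSum (permSet σ) i = #{k : Fin m | (k : ℤ) + 1 = i} := by
  rw [rowSum, permSet, filter_image, card_image_of_injective _ (injective_coe_add_one_prod σ)]

lemma colSum_permSet (σ : Equiv.Perm (Fin m)) (j : ℤ) :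
    colSum (permSet σ) j = #{k : Fin m | (k : ℤ) + 1 = j} := by
  rw [colSum, permSet, filter_image, card_image_of_injective _ (injective_coe_add_one_prod σ)]
  exact card_equiv σ (by simp)

lemma hasLineSums_permSet (σ : Equiv.Perm (Fin m)) :
    hasLineSums (permSet σ) m m (fun _ => 1) (fun _ => 1) := by
  refine ⟨fun i => ?_, fun i hi => ?_, fun j => ?_, fun j hj => ?_⟩
  · rw [rowSum_permSet, card_filter_coe_add_one_eq_one]
  · rw [rowSum_permSet, card_filter_coe_add_one_eq_zero hi]
  · rw [colSum_permSet, card_filter_coe_add_one_eq_one]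
  · rw [colSum_permSet, card_filter_coe_add_one_eq_zero hj]

lemma permSet_injective : Function.Injective (permSet (m := m)) := by
  intro σ τ h
  ext k
  have hk : ((k : ℤ) + 1, (σ k : ℤ) + 1) ∈ permSet σ := mem_image_of_mem _ (mem_univ k)
  rw [h] at hk
  obtain ⟨l, -, hl⟩ := mem_image.1 hk
  simp only [Prod.mk.injEq, add_left_inj, Nat.cast_inj, Fin.val_inj] at hl
  rw [← hl.2, hl.1]

end permSet

lemma conj_const_one_succ (m j : ℕ) : conj m (fun _ => 1) (j + 1) = if j = 0 then m else 0 := by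
  split_ifs with hj <;> simp [conj, hj]

lemma sum_natAbs_one_sub_conj_const_one (α : ℕ) :
    ∑ j : Fin (α + 1), ((1 : ℤ) - conj (α + 1) (fun _ => 1) ((j : ℕ) + 1)).natAbs = 2 * α := by
  simp only [Fin.sum_univ_succ, Fin.val_zero, Fin.val_succ, conj_const_one_succ,
    Nat.succ_ne_zero, if_true, if_false, Nat.cast_add, Nat.cast_one, Nat.cast_zero, sub_zero,
    Int.natAbs_one, sum_const, card_univ, Fintype.card_fin, smul_eq_mul, mul_one]
  rw [sub_add_cancel_right, Int.natAbs_neg, Int.natAbs_natCast]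
  ring

theorem stmt17 (α : ℕ) (hα : 1 ≤ α) :
    ∃ (m n : ℕ) (r : Fin m → ℕ) (c : Fin n → ℕ),
      Antitone r ∧ Antitone c ∧
      (∃ F : Finset (ℤ × ℤ), hasLineSums F m n r c) ∧
      (2 * α = ∑ j : Fin n, ((c j : ℤ) - (conj m r ((j : ℕ) + 1) : ℤ)).natAbs) ∧
      (∃ F₂ F₃ : Finset (ℤ × ℤ),
        hasLineSums F₂ m n r c ∧ hasLineSums F₃ m n r c ∧ F₂ ≠ F₃) ∧
      ∀ F₂ F₃ : Finset (ℤ × ℤ),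
        hasLineSums F₂ m n r c → hasLineSums F₃ m n r c →
        ((F₂ \ F₃) ∪ (F₃ \ F₂)).card ≤ 2 * α + 2 := by
  have hswap : Equiv.swap (0 : Fin (α + 1)) ⟨1, by omega⟩ ≠ 1 := by
    rw [Ne, Equiv.swap_eq_one_iff, Fin.ext_iff]
    simp
  refine ⟨α + 1, α + 1, fun _ => 1, fun _ => 1, antitone_const, antitone_const,
    ⟨_, hasLineSums_permSet 1⟩, (sum_natAbs_one_sub_conj_const_one α).symm,
    ⟨_, _, hasLineSums_permSet _, hasLineSums_permSet _, permSet_injective.ne hswap⟩, ?_⟩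
  intro F₂ F₃ h₂ h₃
  calc #((F₂ \ F₃) ∪ (F₃ \ F₂)) ≤ #F₂ + #F₃ := card_symmDiff_le_card_add_card F₂ F₃
    _ = 2 * α + 2 := by
      simp only [card_eq_sum_of_hasLineSums h₂, card_eq_sum_of_hasLineSums h₃, sum_const,
        card_univ, Fintype.card_fin, smul_eq_mul, mul_one]
      ring
end
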